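/- In the S-subdivision C_ν of a d-simplex ν, let v_i be the vertex introduced at iteration i. Then every edge {u, v_i} of C_ν is of one of two types: (type 1) v_i ≻ u; or (type 2) u ≻ v_i and there are at most d vertices w of C_ν with u ≻ w ≻ v_i. -/

import Mathlib

namespace ArxivCut

noncomputable section

attribute [local instance] Classical.propDecidable

open Finset

/-! ### The S-subdivision of a `d`-simplex -/

/-- The vertices occurring in the S-subdivision of a `d`-simplex: the `d + 1` original
vertices of `ν` (inl) and the `2(d+1)` new vertices `v₁, …, v_{2(d+1)}` (inr). -/
abbrev SVert (d : ℕ) := Fin (d + 1) ⊕ Fin (2 * (d + 1))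

/-- The rank of a vertex, encoding the total order `≻`: the original vertices of `U` come
first (in their given order) and each newly introduced vertex is higher than all previous
ones.  `x ≻ y` means `rank x > rank y`. -/
def rank (d : ℕ) : SVert d → ℕ := Sum.elim Fin.val fun j => (d + 1) + j.val

/-- The key of a set of vertices: comparing keys is exactly the lexicographic comparison
of the decreasingly `≻`-sorted vertex lists (longer prefixes being higher). -/
def key (d : ℕ) (s : Finset (SVert d)) : ℕ := ∑ x ∈ s, 2 ^ rank d x

/-- The lexicographically highest `d`-simplex of the complex `C` (a complex being recorded
by its set of `d`-simplices). -/
def lexTop (d : ℕ) (C : Finset (Finset (SVert d))) : Finset (SVert d) :=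
  if h : C.Nonempty then (Finset.exists_max_image C (key d) h).choose else ∅

/-- Stellar subdivision of the `d`-simplex `Ω` inside `C` with new apex vertex `v`:
`Ω` is removed and replaced by the cone with apex `v` over the boundary of `Ω`. -/
def stellar (d : ℕ) (C : Finset (Finset (SVert d))) (Ω : Finset (SVert d))
    (v : SVert d) : Finset (Finset (SVert d)) :=
  C.erase Ω ∪ Ω.image fun w => insert v (Ω.erase w)

/-- The new vertex introduced at the `(i+1)`-st iteration (`i = 0, …, 2(d+1) − 1`). -/
def newV (d : ℕ) (i : ℕ) : SVert d :=
  if h : i < 2 * (d + 1) then Sum.inr ⟨i, h⟩ else Sum.inl ⟨0, Nat.succ_pos d⟩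

/-- The original `d`-simplex `ν`, on the vertex set `U`. -/
def baseS (d : ℕ) : Finset (SVert d) := Finset.univ.image Sum.inl

/-- The S-subdivision sequence: `(CΩ d i).1 = C_i` (the set of `d`-simplices of the `i`-th
complex) and `(CΩ d i).2 = Ω_{i+1}` (the `d`-simplex to be subdivided next, i.e. the
lexicographically highest `d`-simplex of `C_i`; for `i = 0` it is `Ω₁ = ν`).
The S-subdivision of `ν` is `C_ν = (CΩ d (2*(d+1))).1`, and
`Ω_{2(d+1)+1} = (CΩ d (2*(d+1))).2`. -/
def CΩ (d : ℕ) : ℕ → Finset (Finset (SVert d)) × Finset (SVert d)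
  | 0 => ({baseS d}, baseS d)
  | (i + 1) =>
      let p := CΩ d i
      let C' := stellar d p.1 p.2 (newV d i)
      (C', lexTop d C')

/-- The vertices of a complex recorded by its set of `d`-simplices. -/
def vertsOf (d : ℕ) (C : Finset (Finset (SVert d))) : Finset (SVert d) :=
  C.biUnion id

/-- The `n` `≻`-highest vertices of the complex `C`: those vertices with fewer than `n`
vertices of `C` strictly above them. -/
def highVerts (d : ℕ) (C : Finset (Finset (SVert d))) (n : ℕ) : Finset (SVert d) :=
  (vertsOf d C).filter fun x => ((vertsOf d C).filter fun y => rank d x < rank d y).card < n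

/-! Every `≻`-comparison of the construction only involves ranks, and the key of a set is
the sum of `2 ^ rank` over it, so the lexicographic comparison becomes a comparison of binary
numbers.  By induction, `Ω_{i+1}` consists of the `d + 1` vertices of ranks `i, …, i + d`
and every vertex present before step `i + 1` has rank below that of `v_{i+1}`, which is
`d + 1 + i`.  Subdividing `Ω_{i+1}` only creates simplices `{v_{i+1}} ∪ Ω_{i+1} ∖ {w}`, whose
ranks lie in `[i, d + 1 + i]`; so within any simplex of `C_ν` ranks differ by at most
`d + 1`, leaving room for at most `d` vertices strictly between the two ends of an edge. -/

lemma rank_injective (d : ℕ) : Function.Injective (rank d) := by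
  rintro (a | a) (b | b) h <;> simp only [rank, Sum.elim_inl, Sum.elim_inr] at h
  · exact congrArg Sum.inl (Fin.ext h)
  · exact absurd h (by have := a.isLt; omega)
  · exact absurd h (by have := b.isLt; omega)
  · exact congrArg Sum.inr (Fin.ext (by omega))

lemma exists_rank_eq (d : ℕ) {r : ℕ} (hr : r < 3 * d + 3) : ∃ x : SVert d, rank d x = r := by
  by_cases h : r ≤ d
  · exact ⟨Sum.inl ⟨r, by omega⟩, rfl⟩
  · exact ⟨Sum.inr ⟨r - (d + 1), by omega⟩, by simp only [rank, Sum.elim_inr]; omega⟩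

lemma rank_newV {d i : ℕ} (hi : i < 2 * (d + 1)) : rank d (newV d i) = d + 1 + i := by
  simp [newV, hi, rank]

lemma key_lt_two_pow {d N : ℕ} {s : Finset (SVert d)} (h : ∀ x ∈ s, rank d x < N) :
    key d s < 2 ^ N := by
  rw [key, ← Finset.sum_image fun x _ y _ hxy => rank_injective d hxy]
  refine Nat.geomSum_lt le_rfl fun r hr => ?_
  obtain ⟨x, hx, rfl⟩ := Finset.mem_image.1 hr
  exact h x hx

lemma key_insert {d : ℕ} {v : SVert d} {s : Finset (SVert d)} (hv : v ∉ s) :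
    key d (insert v s) = 2 ^ rank d v + key d s :=
  Finset.sum_insert hv

lemma key_erase_add {d : ℕ} {w : SVert d} {s : Finset (SVert d)} (hw : w ∈ s) :
    key d (s.erase w) + 2 ^ rank d w = key d s :=
  Finset.sum_erase_add s _ hw

lemma key_erase_lt_key_erase {d : ℕ} {s : Finset (SVert d)} {w w₀ : SVert d} (hw : w ∈ s)
    (hw₀ : w₀ ∈ s) (hlt : rank d w₀ < rank d w) : key d (s.erase w) < key d (s.erase w₀) := by
  have := key_erase_add hw
  have := key_erase_add hw₀
  have := Nat.pow_lt_pow_right one_lt_two hlt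
  omega

lemma lexTop_eq_of_forall_key_lt {d : ℕ} {C : Finset (Finset (SVert d))}
    {Ω : Finset (SVert d)} (hΩ : Ω ∈ C) (hmax : ∀ s ∈ C, s ≠ Ω → key d s < key d Ω) :
    lexTop d C = Ω := by
  have hne : C.Nonempty := ⟨Ω, hΩ⟩
  rw [lexTop, dif_pos hne]
  obtain ⟨hmem, hge⟩ := (Finset.exists_max_image C (key d) hne).choose_spec
  by_contra h
  exact (hmax _ hmem h).not_ge (hge Ω hΩ)

lemma mem_stellar {d : ℕ} {C : Finset (Finset (SVert d))} {Ω s : Finset (SVert d)}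
    {v : SVert d} :
    s ∈ stellar d C Ω v ↔ (s ≠ Ω ∧ s ∈ C) ∨ ∃ w ∈ Ω, insert v (Ω.erase w) = s := by
  simp [stellar]

/-- This will turn out to be `Ω_{i+1}`. -/
def window (d i : ℕ) : Finset (SVert d) :=
  Finset.univ.filter fun x => i ≤ rank d x ∧ rank d x ≤ i + d

lemma mem_window {d i : ℕ} {x : SVert d} :
    x ∈ window d i ↔ i ≤ rank d x ∧ rank d x ≤ i + d := by
  simp [window]

lemma newV_notMem_window {d i : ℕ} (hi : i < 2 * (d + 1)) : newV d i ∉ window d i := by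
  rw [mem_window, rank_newV hi]
  omega

lemma window_succ {d i : ℕ} (hi : i < 2 * (d + 1)) {w₀ : SVert d} (hw₀ : rank d w₀ = i) :
    window d (i + 1) = insert (newV d i) ((window d i).erase w₀) := by
  have hv := rank_newV hi
  ext x
  simp only [mem_window, Finset.mem_insert, Finset.mem_erase]
  constructor
  · rintro ⟨h₁, h₂⟩
    by_cases hx : rank d x = d + 1 + i
    · exact Or.inl (rank_injective d (hx.trans hv.symm))
    · exact Or.inr ⟨by rintro rfl; omega, by omega, by omega⟩
  · rintro (rfl | ⟨hxw, h₁, h₂⟩)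
    · omega
    · have : rank d x ≠ i := fun h => hxw (rank_injective d (h.trans hw₀.symm))
      omega

/-- Every old simplex loses to the cone simplices, which contain `v_{i+1}`; among those,
`{v_{i+1}} ∪ Ω_{i+1} ∖ {w}` is highest when the lowest `w` is dropped. -/
lemma lexTop_stellar_window {d i : ℕ} (hi : i < 2 * (d + 1)) {C : Finset (Finset (SVert d))}
    (hC : ∀ s ∈ C, ∀ x ∈ s, rank d x < d + 1 + i) :
    lexTop d (stellar d C (window d i) (newV d i)) = window d (i + 1) := by
  obtain ⟨w₀, hw₀⟩ := exists_rank_eq d (r := i) (by omega)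
  have hw₀Ω : w₀ ∈ window d i := mem_window.2 (by omega)
  have hv := newV_notMem_window hi
  rw [window_succ hi hw₀]
  refine lexTop_eq_of_forall_key_lt (mem_stellar.2 (Or.inr ⟨w₀, hw₀Ω, rfl⟩)) ?_
  rintro s hs hne
  rw [key_insert fun h => hv (Finset.mem_of_mem_erase h), rank_newV hi]
  rcases mem_stellar.1 hs with ⟨-, hsC⟩ | ⟨w, hw, rfl⟩
  · have := key_lt_two_pow (hC s hsC)
    omega
  · have hww₀ : w ≠ w₀ := by rintro rfl; exact hne rfl
    have hlt : rank d w₀ < rank d w := by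
      rw [hw₀]
      exact lt_of_le_of_ne (mem_window.1 hw).1 fun h =>
        hww₀ (rank_injective d (h.symm.trans hw₀.symm))
    rw [key_insert fun h => hv (Finset.mem_of_mem_erase h), rank_newV hi]
    have := key_erase_lt_key_erase hw hw₀Ω hlt
    omega

lemma rank_mem_Icc_of_mem_cone {d i : ℕ} (hi : i < 2 * (d + 1)) {w x : SVert d}
    (hx : x ∈ insert (newV d i) ((window d i).erase w)) :
    i ≤ rank d x ∧ rank d x ≤ d + 1 + i := by
  rcases Finset.mem_insert.1 hx with rfl | hx
  · rw [rank_newV hi]; omega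
  · have := mem_window.1 (Finset.mem_of_mem_erase hx)
    omega

lemma baseS_eq_window (d : ℕ) : baseS d = window d 0 := by
  ext (a | a) <;> simp [baseS, mem_window, rank, Nat.lt_succ_iff.1 a.isLt]
  omega

lemma CΩ_succ (d i : ℕ) : CΩ d (i + 1) =
    (stellar d (CΩ d i).1 (CΩ d i).2 (newV d i),
      lexTop d (stellar d (CΩ d i).1 (CΩ d i).2 (newV d i))) :=
  rfl

lemma rank_lt_and_snd_CΩ_eq_window (d : ℕ) :
    ∀ i ≤ 2 * (d + 1),
      (∀ s ∈ (CΩ d i).1, ∀ x ∈ s, rank d x < d + 1 + i) ∧ (CΩ d i).2 = window d i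
  | 0, _ => by
    refine ⟨fun s hs x hx => ?_, baseS_eq_window d⟩
    rw [show s = window d 0 from (Finset.mem_singleton.1 hs).trans (baseS_eq_window d)] at hx
    have := (mem_window.1 hx).2
    omega
  | i + 1, hi => by
    obtain ⟨hrank, hsnd⟩ := rank_lt_and_snd_CΩ_eq_window d i (by omega)
    rw [CΩ_succ, hsnd]
    refine ⟨fun s hs x hx => ?_, lexTop_stellar_window (by omega) hrank⟩
    rw [mem_stellar] at hs
    rcases hs with ⟨-, hsC⟩ | ⟨w, -, rfl⟩
    · have := hrank s hsC x hx
      omega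
    · have := (rank_mem_Icc_of_mem_cone (by omega) hx).2
      omega

lemma rank_le_rank_add_of_mem_CΩ (d : ℕ) :
    ∀ i ≤ 2 * (d + 1), ∀ s ∈ (CΩ d i).1, ∀ x ∈ s, ∀ y ∈ s, rank d x ≤ rank d y + (d + 1)
  | 0, _ => by
    intro s hs x hx y hy
    simp only [CΩ, Finset.mem_singleton] at hs
    rw [hs, baseS_eq_window, mem_window] at hx hy
    omega
  | i + 1, hi => by
    intro s hs x hx y hy
    rw [CΩ_succ, (rank_lt_and_snd_CΩ_eq_window d i (by omega)).2, mem_stellar] at hs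
    rcases hs with ⟨-, hsC⟩ | ⟨w, -, rfl⟩
    · exact rank_le_rank_add_of_mem_CΩ d i (by omega) s hsC x hx y hy
    · have := rank_mem_Icc_of_mem_cone (by omega) hx
      have := rank_mem_Icc_of_mem_cone (by omega) hy
      omega

lemma card_filter_lt_and_lt_le {α : Type*} {f : α → ℕ} (hf : Function.Injective f)
    (t : Finset α) (a b : ℕ) : (t.filter fun w => f w < b ∧ a < f w).card ≤ b - a - 1 := by
  rw [← Nat.card_Ioo]
  refine Finset.card_le_card_of_injOn f (fun w hw => ?_) hf.injOn
  simp only [Finset.coe_filter, Set.mem_ofPred_eq] at hw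
  simpa using ⟨hw.2.2, hw.2.1⟩

theorem statement18_general (d : ℕ) (j : Fin (2 * (d + 1))) (u : SVert d)
    (hedge : ∃ s ∈ (CΩ d (2 * (d + 1))).1, Sum.inr j ∈ s ∧ u ∈ s ∧ u ≠ Sum.inr j) :
    rank d u < rank d (Sum.inr j) ∨
      (rank d (Sum.inr j) < rank d u ∧
        ((vertsOf d (CΩ d (2 * (d + 1))).1).filter fun w =>
            rank d w < rank d u ∧ rank d (Sum.inr j) < rank d w).card ≤ d) := by
  obtain ⟨s, hs, hvs, hus, hne⟩ := hedge
  rcases lt_or_gt_of_ne fun h => hne (rank_injective d h) with hlt | hgt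
  · exact Or.inl hlt
  · have hspan := rank_le_rank_add_of_mem_CΩ d _ le_rfl s hs u hus _ hvs
    have := card_filter_lt_and_lt_le (rank_injective d) (vertsOf d (CΩ d (2 * (d + 1))).1)
      (rank d (Sum.inr j)) (rank d u)
    exact Or.inr ⟨hgt, by omega⟩

/-- In the S-subdivision `C_ν` of a `d`-simplex, let `v` be the new
vertex introduced at iteration `i` (so `v = Sum.inr j`).  Then every edge `{u, v}` of
`C_ν` is of one of two types: (type 1) `v ≻ u`; or (type 2) `u ≻ v` and there are at most
`d` vertices `w` of `C_ν` with `u ≻ w ≻ v`. -/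
theorem statement18 (d : ℕ) (hd : 1 ≤ d) (j : Fin (2 * (d + 1))) (u : SVert d)
    (hedge : ∃ s ∈ (CΩ d (2 * (d + 1))).1, Sum.inr j ∈ s ∧ u ∈ s ∧ u ≠ Sum.inr j) :
    rank d u < rank d (Sum.inr j) ∨
      (rank d (Sum.inr j) < rank d u ∧
        ((vertsOf d (CΩ d (2 * (d + 1))).1).filter fun w =>
            rank d w < rank d u ∧ rank d (Sum.inr j) < rank d w).card ≤ d) :=
  statement18_general d j u hedge

end

end ArxivCut
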